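/- arXiv:2505.09080 — 2 statements merged into one kernel-verified Lean document; each statement's English description precedes it below -/
import Mathlib

section
/- Let R be a commutative ring, M an R-module, and D = R ⊕ M with projection p: D → R and inclusion z: R → D. If f: A → D ⊗_R D is an R-linear map that equalizes the three maps id_D ⊗ p, p ⊗ id_D, and (z∘p) ⊗ p from D ⊗_R D to D, then the image of f lies in the submodule R ⊕ (M ⊗_R M) of D ⊗_R D ≅ R ⊕ M ⊕ M ⊕ (M ⊗_R M). -/
/-!
Write `e = z ∘ p` and `s = id - e`, so that `x = (e ⊗ e + e ⊗ s + s ⊗ e + s ⊗ s) x` for every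
`x : D ⊗ D`. Since `e ⊗ s` factors through `p ⊗ s`, and `lid ∘ (p ⊗ s)` is exactly the difference
of `p ⊗ id_D` and `(z ∘ p) ⊗ p`, the equalizer condition kills the term `e ⊗ s`; symmetrically,
`id_D ⊗ p = (z ∘ p) ⊗ p` kills `s ⊗ e`. What remains lies in the images of `e ⊗ e` and `s ⊗ s`,
which for `D = R × M` are `R ∙ (z 1 ⊗ z 1)` and the image of `M ⊗ M`.
-/

open TensorProduct

theorem LinearMap.id_sub_inl_comp_fst {R M₁ M₂ : Type*} [Ring R] [AddCommGroup M₁] [Module R M₁]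
    [AddCommGroup M₂] [Module R M₂] :
    LinearMap.id - inl R M₁ M₂ ∘ₗ fst R M₁ M₂ = inr R M₁ M₂ ∘ₗ snd R M₁ M₂ := by
  ext <;> simp

namespace TensorProduct

variable {R D : Type*} [CommRing R] [AddCommGroup D] [Module R D]

theorem map_add_add_apply (e s : D →ₗ[R] D) (x : D ⊗[R] D) :
    map (e + s) (e + s) x = map e e x + map e s x + map s e x + map s s x := by
  simp only [map_add_left, map_add_right, LinearMap.add_apply]
  abel

variable (p : D →ₗ[R] R) (z : R →ₗ[R] D)

theorem lid_comp_map_id_sub :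
    (TensorProduct.lid R D).toLinearMap ∘ₗ map p (LinearMap.id - z ∘ₗ p) =
      (TensorProduct.lid R D).toLinearMap ∘ₗ LinearMap.rTensor D p -
        (TensorProduct.rid R D).toLinearMap ∘ₗ map (z ∘ₗ p) p := by
  ext d d'
  simp [smul_sub, ← map_smul, smul_eq_mul, mul_comm]

theorem rid_comp_map_id_sub :
    (TensorProduct.rid R D).toLinearMap ∘ₗ map (LinearMap.id - z ∘ₗ p) p =
      (TensorProduct.rid R D).toLinearMap ∘ₗ LinearMap.lTensor D p -
        (TensorProduct.rid R D).toLinearMap ∘ₗ map (z ∘ₗ p) p := by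
  ext d d'
  simp [smul_sub]

theorem map_comp_id_sub_apply_eq_zero {x : D ⊗[R] D}
    (h : TensorProduct.lid R D (LinearMap.rTensor D p x) =
      TensorProduct.rid R D (map (z ∘ₗ p) p x)) :
    map (z ∘ₗ p) (LinearMap.id - z ∘ₗ p) x = 0 := by
  have hp : map p (LinearMap.id - z ∘ₗ p) x = 0 := by
    have := congr($(lid_comp_map_id_sub p z) x)
    simpa [h] using this
  rw [← LinearMap.id_comp (LinearMap.id - z ∘ₗ p), map_comp, LinearMap.comp_apply, hp, map_zero]

theorem map_id_sub_comp_apply_eq_zero {x : D ⊗[R] D}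
    (h : TensorProduct.rid R D (LinearMap.lTensor D p x) =
      TensorProduct.rid R D (map (z ∘ₗ p) p x)) :
    map (LinearMap.id - z ∘ₗ p) (z ∘ₗ p) x = 0 := by
  have hp : map (LinearMap.id - z ∘ₗ p) p x = 0 := by
    have := congr($(rid_comp_map_id_sub p z) x)
    simpa [h] using this
  rw [← LinearMap.id_comp (LinearMap.id - z ∘ₗ p), map_comp, LinearMap.comp_apply, hp, map_zero]

theorem mem_range_map_sup_range_map_of_eq {x : D ⊗[R] D}
    (h₁ : TensorProduct.rid R D (LinearMap.lTensor D p x) =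
      TensorProduct.rid R D (map (z ∘ₗ p) p x))
    (h₂ : TensorProduct.lid R D (LinearMap.rTensor D p x) =
      TensorProduct.rid R D (map (z ∘ₗ p) p x)) :
    x ∈ LinearMap.range (map (z ∘ₗ p) (z ∘ₗ p)) ⊔
      LinearMap.range (map (LinearMap.id - z ∘ₗ p) (LinearMap.id - z ∘ₗ p)) := by
  have hx := map_add_add_apply (z ∘ₗ p) (LinearMap.id - z ∘ₗ p) x
  rw [add_sub_cancel, map_id, LinearMap.id_apply, map_comp_id_sub_apply_eq_zero p z h₂,
    map_id_sub_comp_apply_eq_zero p z h₁, add_zero, add_zero] at hx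
  rw [hx]
  exact Submodule.add_mem_sup (LinearMap.mem_range_self _ _) (LinearMap.mem_range_self _ _)

theorem range_map_le_span_tmul (z z' : R →ₗ[R] D) :
    LinearMap.range (map z z') ≤ R ∙ (z 1 ⊗ₜ[R] z' 1) := by
  have : map z z' = LinearMap.toSpanSingleton R _ (z 1 ⊗ₜ[R] z' 1) ∘ₗ
      (TensorProduct.lid R R).toLinearMap := by
    ext
    simp
  rw [this, ← LinearMap.range_toSpanSingleton]
  exact LinearMap.range_comp_le_range _ _

end TensorProduct

/-- For `D = R ⊕ M` with projection `p` and inclusion `z`, if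
`f : A → D ⊗ D` equalizes `id_D ⊗ p`, `p ⊗ id_D` and `(z∘p) ⊗ p`, then the
image of `f` lies in the submodule `R ⊕ (M ⊗ M)` of
`D ⊗ D ≅ R ⊕ M ⊕ M ⊕ (M ⊗ M)`, i.e. in the span of `z(1) ⊗ z(1)` together
with the image of `M ⊗ M`. -/
theorem stmt_9 (R : Type*) [CommRing R] (M A : Type*)
    [AddCommGroup M] [Module R M] [AddCommGroup A] [Module R A]
    (f : A →ₗ[R] ((R × M) ⊗[R] (R × M))) :
    let p : (R × M) →ₗ[R] R := LinearMap.fst R R M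
    let z : R →ₗ[R] (R × M) := LinearMap.inl R R M
    let P1 : ((R × M) ⊗[R] (R × M)) →ₗ[R] (R × M) :=
      (TensorProduct.rid R (R × M)).toLinearMap ∘ₗ LinearMap.lTensor (R × M) p
    let P2 : ((R × M) ⊗[R] (R × M)) →ₗ[R] (R × M) :=
      (TensorProduct.lid R (R × M)).toLinearMap ∘ₗ LinearMap.rTensor (R × M) p
    let P3 : ((R × M) ⊗[R] (R × M)) →ₗ[R] (R × M) :=
      (TensorProduct.rid R (R × M)).toLinearMap ∘ₗ TensorProduct.map (z ∘ₗ p) p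
    P1 ∘ₗ f = P2 ∘ₗ f → P2 ∘ₗ f = P3 ∘ₗ f →
      ∀ a : A, f a ∈
        Submodule.span R {(z 1) ⊗ₜ[R] (z 1)} ⊔
          LinearMap.range (TensorProduct.map (LinearMap.inr R R M) (LinearMap.inr R R M)) := by
  intro p z P1 P2 P3 h12 h23 a
  have h₂ : P2 (f a) = P3 (f a) := LinearMap.congr_fun h23 a
  have h₁ : P1 (f a) = P3 (f a) := (LinearMap.congr_fun h12 a).trans h₂
  have hmem := mem_range_map_sup_range_map_of_eq p z h₁ h₂
  rw [LinearMap.id_sub_inl_comp_fst, map_comp, map_comp] at hmem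
  exact sup_le_sup ((LinearMap.range_comp_le_range _ _).trans (range_map_le_span_tmul z z))
    (LinearMap.range_comp_le_range _ _) hmem
end

section
/- Let R be a commutative ring, M a commutative solid non-unital R-algebra with multiplication α: M ⊗_R M → M an isomorphism with inverse ν. Define l: R ⊕ M → (R ⊕ M) ⊗_R (R ⊕ M) by l(a + x) = a·(1⊗1) + ι(ν(x)), where ι: M ⊗_R M → (R⊕M) ⊗_R (R⊕M) is the canonical inclusion. Then (id ⊗ p) ∘ l = z ∘ p and (p ⊗ id) ∘ l = z ∘ p, where p: R ⊕ M → R is the projection and z: R → R ⊕ M the inclusion. -/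
open TensorProduct

section

variable {R : Type*} [CommSemiring R] {M N P : Type*} [AddCommMonoid M] [Module R M]
  [AddCommMonoid N] [Module R N] [AddCommMonoid P] [Module R P]

theorem lTensor_fst_comp_map_inr (f : N →ₗ[R] P) :
    (LinearMap.fst R R M).lTensor P ∘ₗ map f (LinearMap.inr R R M) = 0 := by
  rw [LinearMap.lTensor_comp_map, LinearMap.fst_comp_inr, map_zero_right]

theorem rTensor_fst_comp_map_inr (f : N →ₗ[R] P) :
    (LinearMap.fst R R M).rTensor P ∘ₗ map (LinearMap.inr R R M) f = 0 := by
  rw [LinearMap.rTensor_comp_map, LinearMap.fst_comp_inr, map_zero_left]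

end

theorem stmt_12_general (R : Type*) [CommRing R] (M : Type*) [AddCommGroup M] [Module R M]
    (ν : M →ₗ[R] (M ⊗[R] M))
    (l : (R × M) →ₗ[R] ((R × M) ⊗[R] (R × M)))
    (hl : ∀ (a : R) (x : M),
      l (a, x) = a • (((1 : R), (0 : M)) ⊗ₜ[R] ((1 : R), (0 : M))) +
        TensorProduct.map (LinearMap.inr R R M) (LinearMap.inr R R M) (ν x)) :
    let p : (R × M) →ₗ[R] R := LinearMap.fst R R M
    let z : R →ₗ[R] (R × M) := LinearMap.inl R R M
    let P1 : ((R × M) ⊗[R] (R × M)) →ₗ[R] (R × M) :=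
      (TensorProduct.rid R (R × M)).toLinearMap ∘ₗ LinearMap.lTensor (R × M) p
    let P2 : ((R × M) ⊗[R] (R × M)) →ₗ[R] (R × M) :=
      (TensorProduct.lid R (R × M)).toLinearMap ∘ₗ LinearMap.rTensor (R × M) p
    P1 ∘ₗ l = z ∘ₗ p ∧ P2 ∘ₗ l = z ∘ₗ p := by
  intro p z P1 P2
  have hP1 (t : M ⊗[R] M) :
      p.lTensor (R × M) (map (LinearMap.inr R R M) (LinearMap.inr R R M) t) = 0 :=
    LinearMap.congr_fun (lTensor_fst_comp_map_inr _) t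
  have hP2 (t : M ⊗[R] M) :
      p.rTensor (R × M) (map (LinearMap.inr R R M) (LinearMap.inr R R M) t) = 0 :=
    LinearMap.congr_fun (rTensor_fst_comp_map_inr _) t
  refine ⟨LinearMap.ext fun (a, x) => ?_, LinearMap.ext fun (a, x) => ?_⟩ <;>
    simp [P1, P2, p, z, hl, hP1, hP2]

/-- For a commutative solid non-unital `R`-algebra `M` with multiplication `α`
and inverse comultiplication `ν`, the vertical lift
`l : R ⊕ M → (R ⊕ M) ⊗ (R ⊕ M)`, `l(a + x) = a·(1 ⊗ 1) + ι(ν x)`, satisfies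
`(id ⊗ p) ∘ l = z ∘ p` and `(p ⊗ id) ∘ l = z ∘ p`. -/
theorem stmt_12 (R : Type*) [CommRing R] (M : Type*) [AddCommGroup M] [Module R M]
    (α : M →ₗ[R] M →ₗ[R] M)
    (hcomm : ∀ m n : M, α m n = α n m)
    (hassoc : ∀ m n k : M, α (α m n) k = α m (α n k))
    (ν : M →ₗ[R] (M ⊗[R] M))
    (hαν : (TensorProduct.lift α) ∘ₗ ν = LinearMap.id)
    (hνα : ν ∘ₗ (TensorProduct.lift α) = LinearMap.id)
    (l : (R × M) →ₗ[R] ((R × M) ⊗[R] (R × M)))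
    (hl : ∀ (a : R) (x : M),
      l (a, x) = a • (((1 : R), (0 : M)) ⊗ₜ[R] ((1 : R), (0 : M))) +
        TensorProduct.map (LinearMap.inr R R M) (LinearMap.inr R R M) (ν x)) :
    let p : (R × M) →ₗ[R] R := LinearMap.fst R R M
    let z : R →ₗ[R] (R × M) := LinearMap.inl R R M
    let P1 : ((R × M) ⊗[R] (R × M)) →ₗ[R] (R × M) :=
      (TensorProduct.rid R (R × M)).toLinearMap ∘ₗ LinearMap.lTensor (R × M) p
    let P2 : ((R × M) ⊗[R] (R × M)) →ₗ[R] (R × M) :=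
      (TensorProduct.lid R (R × M)).toLinearMap ∘ₗ LinearMap.rTensor (R × M) p
    P1 ∘ₗ l = z ∘ₗ p ∧ P2 ∘ₗ l = z ∘ₗ p :=
  stmt_12_general R M ν l hl
end
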